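/- The real Lie algebra generated by the set {x_{n,n+1}, y_{n,n+1} : 1 ≤ n ≤ N−1} equals su(N), the Lie algebra of trace-zero skew-Hermitian N×N complex matrices. -/

import Mathlib

open Matrix Complex

attribute [local instance 100] LieRing.ofAssociativeRing

noncomputable section

/-- Elementary matrix |m⟩⟨n| (1-based indices). -/
def elemMat (N m n : ℕ) : Matrix (Fin N) (Fin N) ℂ :=
  Matrix.of fun i j => if (i : ℕ) + 1 = m ∧ (j : ℕ) + 1 = n then 1 else 0

/-- x_{mn} = |n⟩⟨m| − |m⟩⟨n|. -/
def xg (N m n : ℕ) : Matrix (Fin N) (Fin N) ℂ := elemMat N n m - elemMat N m n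

/-- y_{mn} = i(|n⟩⟨m| + |m⟩⟨n|). -/
def yg (N m n : ℕ) : Matrix (Fin N) (Fin N) ℂ :=
  Complex.I • (elemMat N n m + elemMat N m n)

/-- h_n = |n⟩⟨n| − |n+1⟩⟨n+1|. -/
def hg (N n : ℕ) : Matrix (Fin N) (Fin N) ℂ := elemMat N n n - elemMat N (n + 1) (n + 1)

/-- The commutator [A,B] = AB − BA. -/
def matComm {N : ℕ} (A B : Matrix (Fin N) (Fin N) ℂ) : Matrix (Fin N) (Fin N) ℂ :=
  A * B - B * A

namespace Stmt8Aux

def E (N : ℕ) (i j : Fin N) : Matrix (Fin N) (Fin N) ℂ := Matrix.single i j 1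

variable {N : ℕ}

lemma elemMat_eq (i j : Fin N) : elemMat N ((i:ℕ)+1) ((j:ℕ)+1) = E N i j := by
  ext k l
  simp only [elemMat, E, Matrix.single, of_apply]
  congr 1
  simp [Fin.ext_iff, eq_comm]

lemma E_mul (a b c d : Fin N) : E N a b * E N c d = if b = c then E N a d else 0 := by
  by_cases h : b = c
  · subst h; rw [if_pos rfl, E, E, E, Matrix.single_mul_single_same, one_mul]
  · rw [if_neg h]; exact Matrix.single_mul_single_of_ne (c := (1:ℂ)) a b c h 1

lemma E_conjT (i j : Fin N) : (E N i j)ᴴ = E N j i := by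
  ext k l
  simp [E, Matrix.single, conjTranspose_apply, and_comm]

lemma E_trace (i j : Fin N) : (E N i j).trace = if i = j then 1 else 0 := by
  by_cases h : i = j
  · subst h; rw [if_pos rfl]
    rw [trace]
    rw [Finset.sum_eq_single i]
    · simp [E, Matrix.single, diag]
    · intro k _ hk; simp [E, Matrix.single, diag, Ne.symm hk]
    · simp
  · rw [if_neg h]
    apply Finset.sum_eq_zero; intro k _
    simp [E, Matrix.single, diag]
    rintro rfl rfl; exact h rfl

def X (i j : Fin N) : Matrix (Fin N) (Fin N) ℂ := E N j i - E N i j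
def Y (i j : Fin N) : Matrix (Fin N) (Fin N) ℂ := Complex.I • (E N j i + E N i j)
def Zd (i j : Fin N) : Matrix (Fin N) (Fin N) ℂ := Complex.I • (E N i i - E N j j)

lemma xg_eq (i j : Fin N) : xg N ((i:ℕ)+1) ((j:ℕ)+1) = X i j := by
  simp [xg, X, elemMat_eq]

lemma yg_eq (i j : Fin N) : yg N ((i:ℕ)+1) ((j:ℕ)+1) = Y i j := by
  simp [yg, Y, elemMat_eq]

lemma lie_XX {i j k : Fin N} (hij : i ≠ j) (hjk : j ≠ k) (hik : i ≠ k) :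
    ⁅X i j, X j k⁆ = -(X i k) := by
  simp only [X, Ring.lie_def, sub_mul, mul_sub, E_mul, if_pos rfl, if_neg hij, if_neg hjk,
    if_neg hik, if_neg hij.symm, if_neg hjk.symm, if_neg hik.symm]
  abel_nf
  exact add_comm _ _

lemma lie_XY {i j k : Fin N} (hij : i ≠ j) (hjk : j ≠ k) (hik : i ≠ k) :
    ⁅X i j, Y j k⁆ = -(Y i k) := by
  simp only [X, Y, Ring.lie_def, smul_add, smul_sub, mul_smul_comm, smul_mul_assoc,
    sub_mul, mul_sub, add_mul, mul_add, smul_smul, E_mul, if_pos rfl, if_neg hij, if_neg hjk,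
    if_neg hik, if_neg hij.symm, if_neg hjk.symm, if_neg hik.symm]
  simp only [smul_zero, smul_sub, smul_add]
  abel_nf
  exact add_comm _ _

lemma lie_XYsame {i j : Fin N} (hij : i ≠ j) :
    ⁅X i j, Y i j⁆ = (-2 : ℝ) • Zd i j := by
  simp only [X, Y, Zd, Ring.lie_def, smul_add, smul_sub, mul_smul_comm, smul_mul_assoc,
    sub_mul, mul_sub, add_mul, mul_add, smul_smul, E_mul, if_pos rfl, if_neg hij, if_neg hij.symm]
  simp only [smul_zero, smul_sub, smul_add]
  ext k l
  simp [Matrix.smul_apply, Matrix.sub_apply, Matrix.add_apply]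
  ring

end Stmt8Aux

namespace Fwd
variable {N : ℕ}

lemma trace_elemMat {a b : ℕ} (h : a ≠ b) : (elemMat N a b).trace = 0 := by
  rw [trace]
  apply Finset.sum_eq_zero; intro k _
  simp [elemMat, diag]
  rintro rfl rfl; exact h rfl

lemma conjT_elemMat (a b : ℕ) : (elemMat N a b)ᴴ = elemMat N b a := by
  ext k l
  simp [elemMat, conjTranspose_apply, apply_ite (starRingEnd ℂ), and_comm]

def su (N : ℕ) : LieSubalgebra ℝ (Matrix (Fin N) (Fin N) ℂ) where
  carrier := {A | A.trace = 0 ∧ Aᴴ = -A}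
  add_mem' := by
    rintro A B ⟨h1, h2⟩ ⟨h3, h4⟩
    refine ⟨by simp [trace_add, h1, h3], by simp [conjTranspose_add, h2, h4]; abel⟩
  zero_mem' := by simp
  smul_mem' := by
    rintro c A ⟨h1, h2⟩
    refine ⟨by simp [trace_smul, h1], ?_⟩
    rw [conjTranspose_smul, h2, star_trivial, smul_neg]
  lie_mem' := by
    rintro A B ⟨h1, h2⟩ ⟨h3, h4⟩
    constructor
    · simp only [Ring.lie_def, trace_sub, trace_mul_comm A B, sub_self]
    · simp only [Ring.lie_def, conjTranspose_sub, conjTranspose_mul, h2, h4]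
      simp [mul_neg, neg_mul]

lemma gens_sub_su :
    {B | ∃ n : ℕ, 1 ≤ n ∧ n ≤ N - 1 ∧ (B = xg N n (n + 1) ∨ B = yg N n (n + 1))} ⊆ (su N : Set _) := by
  rintro B ⟨n, h1, h2, h3 | h3⟩ <;> subst h3
  · constructor
    · rw [xg, trace_sub, trace_elemMat (by omega), trace_elemMat (by omega), sub_zero]
    · rw [xg, conjTranspose_sub, conjT_elemMat, conjT_elemMat]
      abel
  · constructor
    · rw [yg, trace_smul, trace_add, trace_elemMat (by omega), trace_elemMat (by omega)]
      simp
    · rw [yg, conjTranspose_smul, conjTranspose_add, conjT_elemMat, conjT_elemMat, ← neg_smul]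
      simp only [star_def, Complex.conj_I, neg_smul, neg_neg, neg_smul]
      rw [add_comm]

end Fwd

namespace Bwd
open Stmt8Aux

variable {N : ℕ}

def gens (N : ℕ) : Set (Matrix (Fin N) (Fin N) ℂ) :=
  {B | ∃ n : ℕ, 1 ≤ n ∧ n ≤ N - 1 ∧ (B = xg N n (n + 1) ∨ B = yg N n (n + 1))}

abbrev L (N : ℕ) := LieSubalgebra.lieSpan ℝ (Matrix (Fin N) (Fin N) ℂ) (gens N)

lemma base_mem {i j : Fin N} (h : (i:ℕ)+1 = (j:ℕ)) : X i j ∈ L N ∧ Y i j ∈ L N := by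
  have hj := j.isLt
  constructor
  · apply LieSubalgebra.subset_lieSpan
    refine ⟨(i:ℕ)+1, by omega, by omega, Or.inl ?_⟩
    rw [← xg_eq i j, show (j:ℕ)+1 = (i:ℕ)+1+1 by omega]
  · apply LieSubalgebra.subset_lieSpan
    refine ⟨(i:ℕ)+1, by omega, by omega, Or.inr ?_⟩
    rw [← yg_eq i j, show (j:ℕ)+1 = (i:ℕ)+1+1 by omega]

lemma XY_mem : ∀ (d : ℕ) {i j : Fin N}, (j:ℕ) = (i:ℕ) + 1 + d → X i j ∈ L N ∧ Y i j ∈ L N := by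
  intro d
  induction d with
  | zero => intro i j h; exact base_mem (by omega)
  | succ d ih =>
    intro i j h
    have hj := j.isLt
    have hkN : (i:ℕ) + 1 + d < N := by omega
    set k : Fin N := ⟨(i:ℕ)+1+d, hkN⟩ with hk
    obtain ⟨hX, hY⟩ := ih (i := i) (j := k) rfl
    have hkj : (k:ℕ) + 1 = (j:ℕ) := by simp [hk]; omega
    obtain ⟨hXkj, hYkj⟩ := base_mem hkj
    have ne1 : i ≠ k := Fin.ne_of_val_ne (by simp [hk]; omega)
    have ne2 : k ≠ j := Fin.ne_of_val_ne (by simp [hk]; omega)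
    have ne3 : i ≠ j := Fin.ne_of_val_ne (by omega)
    constructor
    · have hcomm := lie_XX ne1 ne2 ne3
      have hm := (L N).lie_mem hX hXkj
      rw [hcomm] at hm
      simpa using neg_mem hm
    · have hcomm := lie_XY ne1 ne2 ne3
      have hm := (L N).lie_mem hX hYkj
      rw [hcomm] at hm
      simpa using neg_mem hm

lemma X_mem {i j : Fin N} (h : (i:ℕ) < (j:ℕ)) : X i j ∈ L N :=
  (XY_mem ((j:ℕ) - (i:ℕ) - 1) (by omega)).1

lemma Y_mem {i j : Fin N} (h : (i:ℕ) < (j:ℕ)) : Y i j ∈ L N :=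
  (XY_mem ((j:ℕ) - (i:ℕ) - 1) (by omega)).2

lemma Zd_mem {i j : Fin N} (h : (i:ℕ) < (j:ℕ)) : Zd i j ∈ L N := by
  have hne : i ≠ j := Fin.ne_of_val_ne (by omega)
  have hb := (L N).lie_mem (X_mem h) (Y_mem h)
  rw [lie_XYsame hne] at hb
  have := (L N).smul_mem (-(1/2) : ℝ) hb
  rw [smul_smul] at this
  norm_num at this
  exact this

end Bwd

namespace Bwd
open Stmt8Aux

lemma smul_E_eq (c : ℂ) (i j : Fin N) : c • E N i j = Matrix.single i j c := by
  ext k l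
  simp only [E, Matrix.single, Matrix.smul_apply, Matrix.of_apply, smul_eq_mul]
  split_ifs <;> simp

lemma pair_decomp (A : Matrix (Fin N) (Fin N) ℂ) (i j : Fin N)
    (hji : A i j = -(starRingEnd ℂ) (A j i)) :
    (A j i).re • X i j + (A j i).im • Y i j = A j i • E N j i + A i j • E N i j := by
  rw [hji]
  ext k l
  simp only [X, Y, E, Matrix.single, Matrix.smul_apply, Matrix.add_apply, Matrix.sub_apply,
    Matrix.of_apply, smul_eq_mul, Complex.real_smul]
  split_ifs <;> simp [Complex.ext_iff, Complex.mul_re, Complex.mul_im] <;> ring_nf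

lemma diag_decomp (A : Matrix (Fin N) (Fin N) ℂ) (i l0 : Fin N) (h0 : (A i i).re = 0) :
    (A i i).im • Zd i l0 = A i i • E N i i - (A i i).im • (Complex.I • E N l0 l0) := by
  ext k l
  simp only [Zd, E, Matrix.single, Matrix.smul_apply, Matrix.sub_apply, Matrix.of_apply,
    smul_eq_mul, Complex.real_smul]
  split_ifs <;> simp [Complex.ext_iff, Complex.mul_re, Complex.mul_im, h0]

end Bwd

namespace Bwd
open Stmt8Aux

lemma mem_of_su {M : ℕ} {A : Matrix (Fin (M+1)) (Fin (M+1)) ℂ}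
    (htr : A.trace = 0) (hsk : Aᴴ = -A) : A ∈ L (M+1) := by
  have hconj : ∀ k l : Fin (M+1), A k l = -(starRingEnd ℂ) (A l k) := by
    intro k l
    have h1 := congrFun (congrFun hsk l) k
    simp only [conjTranspose_apply, Matrix.neg_apply] at h1
    have h2 := congrArg (starRingEnd ℂ) h1
    simpa using h2
  have hre : ∀ i : Fin (M+1), (A i i).re = 0 := by
    intro i
    have h2 := congrArg Complex.re (hconj i i)
    simp at h2
    linarith
  have hsum : ∑ i : Fin (M+1), (A i i).im = 0 := by
    have h1 : (A.trace).im = 0 := by rw [htr]; simp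
    rw [trace, Complex.im_sum] at h1
    simpa [Matrix.diag_apply] using h1
  set last : Fin (M+1) := Fin.last M with hlast
  set SOff : Matrix (Fin (M+1)) (Fin (M+1)) ℂ :=
    ∑ i : Fin (M+1), ∑ j : Fin (M+1), if (i:ℕ) < (j:ℕ) then (A j i).re • X i j + (A j i).im • Y i j else 0 with hSOff
  set SDiag : Matrix (Fin (M+1)) (Fin (M+1)) ℂ := ∑ i : Fin (M+1), (A i i).im • Zd i last with hSDiag
  have hmem : SOff + SDiag ∈ L (M+1) := by
    apply add_mem
    · apply sum_mem; intro i _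
      apply sum_mem; intro j _
      split_ifs with h
      · exact add_mem ((L (M+1)).smul_mem _ (X_mem h)) ((L (M+1)).smul_mem _ (Y_mem h))
      · exact zero_mem _
    · apply sum_mem; intro i _
      rcases lt_or_eq_of_le (Nat.lt_succ_iff.mp i.isLt) with h | h
      · exact (L (M+1)).smul_mem _ (Zd_mem (by simpa [hlast] using h))
      · have hi : i = last := Fin.ext (by simpa [hlast] using h)
        rw [hi]
        have hz : Zd (N := M+1) last last = 0 := by simp [Zd]
        rw [hz, smul_zero]
        exact zero_mem _
  have hSOff2 : SOff = (∑ i : Fin (M+1), ∑ j : Fin (M+1), if ((j:ℕ) < (i:ℕ)) then A i j • E (M+1) i j else 0)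
      + ∑ i : Fin (M+1), ∑ j : Fin (M+1), if ((i:ℕ) < (j:ℕ)) then A i j • E (M+1) i j else 0 := by
    rw [hSOff]
    have step1 : ∀ i j : Fin (M+1),
        (if (i:ℕ) < (j:ℕ) then (A j i).re • X i j + (A j i).im • Y i j else 0)
        = (if (i:ℕ) < (j:ℕ) then A j i • E (M+1) j i else 0)
          + (if (i:ℕ) < (j:ℕ) then A i j • E (M+1) i j else 0) := by
      intro i j
      split_ifs with h
      · rw [pair_decomp A i j (hconj i j)]
      · rw [add_zero]
    rw [Finset.sum_congr rfl fun i _ => Finset.sum_congr rfl fun j _ => step1 i j]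
    rw [Finset.sum_congr rfl fun i _ => Finset.sum_add_distrib, Finset.sum_add_distrib]
    congr 1
    rw [Finset.sum_comm]
  have hSDiag2 : SDiag = ∑ i : Fin (M+1), A i i • E (M+1) i i := by
    rw [hSDiag]
    rw [Finset.sum_congr rfl fun i _ => diag_decomp A i last (hre i)]
    rw [Finset.sum_sub_distrib, ← Finset.sum_smul, hsum, zero_smul, sub_zero]
  have hA : A = SOff + SDiag := by
    conv_lhs => rw [matrix_eq_sum_single A]
    rw [hSOff2, hSDiag2]
    have h3 : ∑ i : Fin (M+1), A i i • E (M+1) i i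
        = ∑ i : Fin (M+1), ∑ j : Fin (M+1), if j = i then A i j • E (M+1) i j else 0 := by
      apply Finset.sum_congr rfl; intro i _
      simp
    rw [h3, ← Finset.sum_add_distrib, ← Finset.sum_add_distrib]
    apply Finset.sum_congr rfl; intro i _
    rw [← Finset.sum_add_distrib, ← Finset.sum_add_distrib]
    apply Finset.sum_congr rfl; intro j _
    rw [← smul_E_eq]
    rcases lt_trichotomy ((i:ℕ)) ((j:ℕ)) with h | h | h
    · rw [if_neg (by omega), if_pos h, if_neg (by intro hji; rw [hji] at h; exact lt_irrefl _ h)]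
      simp
    · have hji : j = i := Fin.ext h.symm
      rw [if_neg (by omega), if_neg (by omega), if_pos hji]
      simp
    · rw [if_pos h, if_neg (by omega), if_neg (by intro hji; rw [hji] at h; exact lt_irrefl _ h)]
      simp
  rw [hA]
  exact hmem

end Bwd


theorem stmt8 (N : ℕ) (A : Matrix (Fin N) (Fin N) ℂ) :
    A ∈ LieSubalgebra.lieSpan ℝ (Matrix (Fin N) (Fin N) ℂ)
        {B | ∃ n : ℕ, 1 ≤ n ∧ n ≤ N - 1 ∧ (B = xg N n (n + 1) ∨ B = yg N n (n + 1))} ↔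
      (A.trace = 0 ∧ Aᴴ = -A) := by
  constructor
  · intro h
    exact (LieSubalgebra.lieSpan_le.mpr Fwd.gens_sub_su) h
  · rintro ⟨htr, hsk⟩
    cases N with
    | zero =>
      have hA : A = 0 := by ext i; exact i.elim0
      rw [hA]; exact zero_mem _
    | succ M => exact Bwd.mem_of_su htr hsk
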